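/- Let K ∈ ℕ with K ≥ 1, and let R₁, …, R_{K+1} : Ω → ℝ be real random variables on a probability space (Ω, F, P) whose joint distribution is exchangeable, i.e., for every permutation π of {1, …, K+1}, the law of (R_{π(1)}, …, R_{π(K+1)}) equals the law of (R₁, …, R_{K+1}). Let ε ∈ (0,1) and set q = ⌈(K+1)(1−ε)⌉, and assume q ≤ K. Define R_(q)(ω) to be the q-th smallest value among R₁(ω), …, R_K(ω). Then P(R_{K+1} ≤ R_(q)) ≥ 1 − ε. -/

import Mathlib

/-!
Let `E j` be the event that fewer than `q` of the `K + 1` scores lie strictly below `R j`.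
Every score that is at most the `q`-th smallest one has this property, so at every outcome
at least `q` of the events occur, and `∑ j, P (E j) ≥ q`. Exchangeability makes all
`P (E j)` equal, hence `P (E K) ≥ q / (K + 1) ≥ 1 - ε`. Finally, `R K` has fewer than `q`
calibration scores strictly below it exactly when it is at most their `q`-th smallest value.
-/

open MeasureTheory

/-- The `q`-th smallest value (1-indexed) among the `K` values `r 0, …, r (K-1)`,
obtained by sorting the realized values in ascending order. -/
noncomputable def qthSmallest {K : ℕ} (q : ℕ) (r : Fin K → ℝ) : ℝ :=
  (List.insertionSort (· ≤ ·) (List.ofFn r)).getD (q - 1) 0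

open Finset
open scoped ENNReal

namespace List.SortedLE

variable {α : Type*} [LinearOrder α] {L : List α}

theorem countP_lt_getElem_le (hL : L.SortedLE) {i : ℕ} (hi : i < L.length) :
    L.countP (· < L[i]) ≤ i := by
  have hdrop : (L.drop i).countP (· < L[i]) = 0 := by
    refine List.countP_eq_zero.2 fun a ha => ?_
    obtain ⟨k, hk, rfl⟩ := List.mem_iff_getElem.1 ha
    simpa [List.getElem_drop] using hL.getElem_le_getElem_of_le (Nat.le_add_right i k)
  calc L.countP (· < L[i])
      = (L.take i).countP (· < L[i]) + (L.drop i).countP (· < L[i]) := by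
        rw [← List.countP_append, List.take_append_drop]
    _ ≤ i := by
      rw [hdrop, add_zero]
      exact List.countP_le_length.trans (List.length_take_le _ _)

theorem lt_countP_le_getElem (hL : L.SortedLE) {i : ℕ} (hi : i < L.length) :
    i < L.countP (· ≤ L[i]) := by
  have htake : (L.take (i + 1)).countP (· ≤ L[i]) = i + 1 := by
    rw [List.countP_eq_length.2, List.length_take, min_eq_left hi]
    intro a ha
    obtain ⟨k, hk, rfl⟩ := List.mem_iff_getElem.1 ha
    simp only [List.length_take] at hk
    simpa [List.getElem_take] using hL.getElem_le_getElem_of_le (by omega : k ≤ i)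
  have := (List.take_sublist (i + 1) L).countP_le (p := (· ≤ L[i]))
  omega

end List.SortedLE

theorem Fin.countP_ofFn {α : Type*} {n : ℕ} (x : Fin n → α) (p : α → Prop)
    [DecidablePred p] :
    (List.ofFn x).countP p = #{i | p (x i)} := by
  rw [← Multiset.coe_countP, ← Fin.univ_val_map, Multiset.countP_map]; rfl

section qthSmallest

variable {n q : ℕ} (x : Fin n → ℝ)

theorem card_lt_qthSmallest_lt (hq : 1 ≤ q) (hqn : q ≤ n) :
    #{i | x i < qthSmallest q x} < q := by
  have hlen : q - 1 < ((List.ofFn x).insertionSort (· ≤ ·)).length := by simp; omega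
  rw [qthSmallest, List.getD_eq_getElem _ _ hlen, ← Fin.countP_ofFn x (· < _),
    ← (List.perm_insertionSort (· ≤ ·) (List.ofFn x)).countP_eq]
  have := List.sortedLE_insertionSort.countP_lt_getElem_le hlen
  omega

theorem le_card_le_qthSmallest (hq : 1 ≤ q) (hqn : q ≤ n) :
    q ≤ #{i | x i ≤ qthSmallest q x} := by
  have hlen : q - 1 < ((List.ofFn x).insertionSort (· ≤ ·)).length := by simp; omega
  rw [qthSmallest, List.getD_eq_getElem _ _ hlen, ← Fin.countP_ofFn x (· ≤ _),
    ← (List.perm_insertionSort (· ≤ ·) (List.ofFn x)).countP_eq]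
  have := List.sortedLE_insertionSort.lt_countP_le_getElem hlen
  omega

theorem card_lt_lt_iff_le_qthSmallest (hq : 1 ≤ q) (hqn : q ≤ n) (t : ℝ) :
    #{i | x i < t} < q ↔ t ≤ qthSmallest q x := by
  refine ⟨fun h => ?_, fun ht => ?_⟩
  · by_contra! ht
    have := card_le_card (monotone_filter_right univ fun i _ (hi : x i ≤ _) => hi.trans_lt ht)
    exact (h.trans_le ((le_card_le_qthSmallest x hq hqn).trans this)).false
  · have := card_le_card (monotone_filter_right univ fun i _ (hi : x i < t) => hi.trans_le ht)
    exact this.trans_lt (card_lt_qthSmallest_lt x hq hqn)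

end qthSmallest

section rank

variable {ι α : Type*} [Fintype ι] [LinearOrder α]

def rank (x : ι → α) (j : ι) : ℕ := #{i | x i < x j}

theorem rank_comp_perm (x : ι → α) (π : Equiv.Perm ι) (j : ι) :
    rank (x ∘ π) j = rank x (π j) :=
  card_equiv π (by simp)

theorem rank_last {n : ℕ} (x : Fin (n + 1) → α) :
    rank x (Fin.last n) = #{i : Fin n | x i.castSucc < x (Fin.last n)} := by
  rw [rank, card_filter, card_filter, Fin.sum_univ_castSucc]
  simp

theorem le_card_rank_lt {n q : ℕ} (x : Fin n → ℝ) (hq : 1 ≤ q) (hqn : q ≤ n) :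
    q ≤ #{j | rank x j < q} := by
  simpa only [rank, card_lt_lt_iff_le_qthSmallest x hq hqn] using le_card_le_qthSmallest x hq hqn

theorem measurable_rank (j : ι) : Measurable fun x : ι → ℝ => rank x j := by
  simp only [rank, card_filter]
  exact Finset.measurable_sum _ fun i _ => Measurable.ite
    (measurableSet_lt (measurable_pi_apply i) (measurable_pi_apply j)) measurable_const
    measurable_const

end rank

open Classical in
theorem MeasureTheory.nat_mul_measure_univ_le_sum_measure {Ω ι : Type*} [MeasurableSpace Ω]
    [Fintype ι] (μ : Measure Ω) {E : ι → Set Ω} (hE : ∀ j, MeasurableSet (E j)) {q : ℕ}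
    (h : ∀ ω, q ≤ #{j | ω ∈ E j}) : q * μ Set.univ ≤ ∑ j, μ (E j) := by
  calc q * μ Set.univ = ∫⁻ _, (q : ℝ≥0∞) ∂μ := (lintegral_const _).symm
    _ ≤ ∫⁻ ω, ∑ j, (E j).indicator 1 ω ∂μ := lintegral_mono fun ω => by
        simp only [Set.indicator_apply, Pi.one_apply, Finset.sum_boole]
        exact_mod_cast h ω
    _ = ∑ j, μ (E j) := by
        rw [lintegral_finsetSum _ fun j _ => measurable_one.indicator (hE j)]
        simp only [lintegral_indicator_one (hE _)]

def Exchangeable {Ω ι β : Type*} [MeasurableSpace Ω] [MeasurableSpace β] (P : Measure Ω)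
    (R : ι → Ω → β) : Prop :=
  ∀ π : Equiv.Perm ι, P.map (fun ω i => R (π i) ω) = P.map (fun ω i => R i ω)

theorem Exchangeable.measure_rank_lt_eq {Ω ι : Type*} [MeasurableSpace Ω] [Fintype ι]
    [DecidableEq ι] {P : Measure Ω} {R : ι → Ω → ℝ} (hR : Exchangeable P R)
    (hmeas : ∀ i, Measurable (R i)) (q : ℕ) (j k : ι) :
    P {ω | rank (R · ω) j < q} = P {ω | rank (R · ω) k < q} := by
  have hA : MeasurableSet {x : ι → ℝ | rank x k < q} :=
    measurableSet_lt (measurable_rank k) measurable_const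
  have hswap : {ω | rank (R · ω) j < q} =
      (fun ω i => R (Equiv.swap j k i) ω) ⁻¹' {x | rank x k < q} := by
    ext ω
    change _ ↔ rank ((R · ω) ∘ Equiv.swap j k) k < q
    rw [rank_comp_perm, Equiv.swap_apply_right]
    exact Iff.rfl
  rw [hswap, ← Measure.map_apply (measurable_pi_lambda _ fun i => hmeas _) hA, hR,
    Measure.map_apply (measurable_pi_lambda _ hmeas) hA]
  rfl

theorem conformal_coverage_general
    {Ω : Type*} [MeasurableSpace Ω] (P : Measure Ω) [IsProbabilityMeasure P]
    (K : ℕ) (R : Fin (K + 1) → Ω → ℝ)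
    (hmeas : ∀ i, Measurable (R i))
    (hexch : ∀ π : Equiv.Perm (Fin (K + 1)),
      Measure.map (fun ω => fun i => R (π i) ω) P =
        Measure.map (fun ω => fun i => R i ω) P)
    (ε : ℝ) (hε₁ : ε < 1)
    (q : ℕ) (hq : q = ⌈((K : ℝ) + 1) * (1 - ε)⌉₊) (hqK : q ≤ K) :
    ENNReal.ofReal (1 - ε) ≤
      P {ω | R (Fin.last K) ω ≤ qthSmallest q (fun i : Fin K => R i.castSucc ω)} := by
  have hq₁ : 1 ≤ q := hq ▸ Nat.ceil_pos.2 (mul_pos (by positivity) (by linarith))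
  let E (j : Fin (K + 1)) : Set Ω := {ω | rank (R · ω) j < q}
  have hE (j) : MeasurableSet (E j) :=
    measurableSet_lt ((measurable_rank j).comp (measurable_pi_lambda _ hmeas)) measurable_const
  have hcount : (q : ℝ≥0∞) ≤ (K + 1) * P (E (Fin.last K)) := by
    simpa [E, Exchangeable.measure_rank_lt_eq hexch hmeas q _ (Fin.last K)] using
      nat_mul_measure_univ_le_sum_measure P hE fun ω => by
        convert le_card_rank_lt (R · ω) hq₁ (by omega)
        exact Iff.rfl
  have hsub : E (Fin.last K) ⊆
      {ω | R (Fin.last K) ω ≤ qthSmallest q (fun i : Fin K => R i.castSucc ω)} := fun ω hω =>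
    (card_lt_lt_iff_le_qthSmallest _ hq₁ hqK _).1 (rank_last (R · ω) ▸ hω)
  have hε : 1 - ε ≤ q / (K + 1 : ℝ) := by
    rw [le_div_iff₀ (by positivity), mul_comm, hq]
    exact Nat.le_ceil _
  calc ENNReal.ofReal (1 - ε)
      ≤ ENNReal.ofReal (q / (K + 1 : ℝ)) := ENNReal.ofReal_le_ofReal hε
    _ = q / (K + 1) := by
      rw [ENNReal.ofReal_div_of_pos (by positivity)]
      norm_cast
    _ ≤ P (E (Fin.last K)) := ENNReal.div_le_of_le_mul' hcount
    _ ≤ _ := measure_mono hsub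

/-- Split conformal prediction coverage guarantee: if the `K + 1` scores
`R 0, …, R K` are exchangeable, `ε ∈ (0,1)` and `q = ⌈(K+1)(1−ε)⌉ ≤ K`, then the
new score `R K` is at most the `q`-th smallest of the first `K` calibration
scores with probability at least `1 − ε`. -/
theorem conformal_coverage
    {Ω : Type*} [MeasurableSpace Ω] (P : Measure Ω) [IsProbabilityMeasure P]
    (K : ℕ) (hK : 1 ≤ K) (R : Fin (K + 1) → Ω → ℝ)
    (hmeas : ∀ i, Measurable (R i))
    (hexch : ∀ π : Equiv.Perm (Fin (K + 1)),
      Measure.map (fun ω => fun i => R (π i) ω) P =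
        Measure.map (fun ω => fun i => R i ω) P)
    (ε : ℝ) (hε₀ : 0 < ε) (hε₁ : ε < 1)
    (q : ℕ) (hq : q = ⌈((K : ℝ) + 1) * (1 - ε)⌉₊) (hqK : q ≤ K) :
    ENNReal.ofReal (1 - ε) ≤
      P {ω | R (Fin.last K) ω ≤ qthSmallest q (fun i : Fin K => R i.castSucc ω)} :=
  conformal_coverage_general P K R hmeas hexch ε hε₁ q hq hqK
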